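/- Fix integers k, m ≥ 2 and define ψ(ξ) = ξ₁ξ₂ᵏ + (ξ₃ − ξ₂ξ₄)ᵐ on ℂ⁴ and Γ = ∇ψ. For every ξ with ξ₂ ≠ 0, the vector v(ξ) = ((m/k)·(ξ₃ − ξ₂ξ₄)^{m−1}/ξ₂^{k−1}, 0, ξ₂, 1) satisfies Γ(ξ + t·v(ξ)) = Γ(ξ) for all t ∈ ℂ. -/

import Mathlib

/-!
Along `v(ξ)` both `ξ₂` and `u = ξ₃ - ξ₂ξ₄` stay fixed, and `Γ₁, Γ₃, Γ₄` depend on `ξ` only through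
them. In `Γ₂ = kξ₁ξ₂^{k-1} - mξ₄u^{m-1}` the first component of `v` is chosen so that the growth
`t·m u^{m-1}` of the first term cancels that of the second, caused by `ξ₄ ↦ ξ₄ + t`.
-/

noncomputable def grad {n : ℕ} (ψ : (Fin n → ℂ) → ℂ) (ξ : Fin n → ℂ) : Fin n → ℂ :=
  fun i => fderiv ℂ ψ ξ (Pi.single i 1)

open ContinuousLinearMap

lemma grad_eq_of_hasFDerivAt {n : ℕ} {ψ : (Fin n → ℂ) → ℂ} {L : (Fin n → ℂ) →L[ℂ] ℂ}
    {ξ : Fin n → ℂ} (h : HasFDerivAt ψ L ξ) : grad ψ ξ = fun i => L (Pi.single i 1) := by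
  unfold grad
  rw [h.fderiv]

lemma grad_psi (k m : ℕ) (ξ : Fin 4 → ℂ) :
    grad (fun ξ => ξ 0 * (ξ 1) ^ k + (ξ 2 - ξ 1 * ξ 3) ^ m) ξ =
      ![ξ 1 ^ k,
        k * ξ 0 * ξ 1 ^ (k - 1) - m * ξ 3 * (ξ 2 - ξ 1 * ξ 3) ^ (m - 1),
        m * (ξ 2 - ξ 1 * ξ 3) ^ (m - 1),
        -(m * ξ 1 * (ξ 2 - ξ 1 * ξ 3) ^ (m - 1))] := by
  have hx (i : Fin 4) : HasFDerivAt (fun x : Fin 4 → ℂ => x i) (proj (R := ℂ) i) ξ :=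
    hasFDerivAt_apply i ξ
  have hψ : HasFDerivAt (fun x : Fin 4 → ℂ => x 0 * x 1 ^ k + (x 2 - x 1 * x 3) ^ m) _ ξ :=
    ((hx 0).mul ((hasDerivAt_pow k _).comp_hasFDerivAt ξ (hx 1))).add
      ((hasDerivAt_pow m _).comp_hasFDerivAt ξ ((hx 2).sub ((hx 1).mul (hx 3))))
  rw [grad_eq_of_hasFDerivAt hψ]
  ext i
  fin_cases i <;> simp <;> ring

theorem stmt_10_general (k m : ℕ) (hk : 2 ≤ k) (ξ : Fin 4 → ℂ) (hξ : ξ 1 ≠ 0) (t : ℂ) :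
    grad (fun ξ => ξ 0 * (ξ 1) ^ k + (ξ 2 - ξ 1 * ξ 3) ^ m)
        (ξ + t • ![(m : ℂ) / (k : ℂ) * (ξ 2 - ξ 1 * ξ 3) ^ (m - 1) / (ξ 1) ^ (k - 1),
          0, ξ 1, 1]) =
      grad (fun ξ => ξ 0 * (ξ 1) ^ k + (ξ 2 - ξ 1 * ξ 3) ^ m) ξ := by
  have hk0 : (k : ℂ) ≠ 0 := by exact_mod_cast (by omega : k ≠ 0)
  have hpow : ξ 1 ^ (k - 1) ≠ 0 := pow_ne_zero _ hξ
  have hu : ξ 2 + t * ξ 1 - ξ 1 * (ξ 3 + t) = ξ 2 - ξ 1 * ξ 3 := by ring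
  rw [grad_psi, grad_psi]
  ext i
  fin_cases i <;> simp [hu]
  field_simp
  ring

theorem stmt_10 (k m : ℕ) (hk : 2 ≤ k) (hm : 2 ≤ m) (ξ : Fin 4 → ℂ) (hξ : ξ 1 ≠ 0) (t : ℂ) :
    grad (fun ξ => ξ 0 * (ξ 1) ^ k + (ξ 2 - ξ 1 * ξ 3) ^ m)
        (ξ + t • ![(m : ℂ) / (k : ℂ) * (ξ 2 - ξ 1 * ξ 3) ^ (m - 1) / (ξ 1) ^ (k - 1),
          0, ξ 1, 1]) =
      grad (fun ξ => ξ 0 * (ξ 1) ^ k + (ξ 2 - ξ 1 * ξ 3) ^ m) ξ :=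
  stmt_10_general k m hk ξ hξ t
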